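/- Given H₀ = K_x² + K_y² with [K_x, K_y] = i b, κ_R ≠ 0, γ ∈ ℝ, define H_R = σ₀⊗H₀ + 2κ_R U_R + γ b (σ_z⊗I) where U_R = σ_x⊗K_y − σ_y⊗K_x, and set β_R = (γ+1)b/(2κ_R), V_R = U_R + β_R(σ_z⊗I). Then H_R = V_R² + 2κ_R V_R − β_R²·I. -/
import Mathlib


open ContinuousLinearMap

/-- `σ_x ⊗ K` acting on `ℂ² ⊗ H ≅ H ⊕ H`. -/
def sigmaXT {H : Type*} [NormedAddCommGroup H] [NormedSpace ℂ H]
    (K : H →L[ℂ] H) : (H × H) →L[ℂ] (H × H) :=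
  (K.comp (snd ℂ H H)).prod (K.comp (fst ℂ H H))

/-- `σ_y ⊗ K` acting on `ℂ² ⊗ H ≅ H ⊕ H`. -/
def sigmaYT {H : Type*} [NormedAddCommGroup H] [NormedSpace ℂ H]
    (K : H →L[ℂ] H) : (H × H) →L[ℂ] (H × H) :=
  ((-Complex.I) • K.comp (snd ℂ H H)).prod (Complex.I • K.comp (fst ℂ H H))

/-- `σ_z ⊗ I` acting on `ℂ² ⊗ H ≅ H ⊕ H`. -/
def sigmaZT (H : Type*) [NormedAddCommGroup H] [NormedSpace ℂ H] :
    (H × H) →L[ℂ] (H × H) :=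
  (fst ℂ H H).prod (-(snd ℂ H H))

/-- `σ₀ ⊗ K` acting on `ℂ² ⊗ H ≅ H ⊕ H`. -/
def sigma0T {H : Type*} [NormedAddCommGroup H] [NormedSpace ℂ H]
    (K : H →L[ℂ] H) : (H × H) →L[ℂ] (H × H) :=
  K.prodMap K

/-- The Rashba Hamiltonian `H_R = σ₀⊗H₀ + 2κ_R U_R + γ b (σ_z⊗I)` satisfies
`H_R = V_R² + 2κ_R V_R − β_R²` with `β_R = (γ+1)b/(2κ_R)`, `V_R = U_R + β_R (σ_z⊗I)`. -/
theorem rashba_hamiltonian_susy_form {H : Type*} [NormedAddCommGroup H]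
    [InnerProductSpace ℂ H] [CompleteSpace H] (Kx Ky : H →L[ℂ] H)
    (hKx : IsSelfAdjoint Kx) (hKy : IsSelfAdjoint Ky) (b γ κR : ℝ) (hκ : κR ≠ 0)
    (hcomm : Kx.comp Ky - Ky.comp Kx = (Complex.I * b) • ContinuousLinearMap.id ℂ H)
    (βR : ℝ) (hβ : βR = (γ + 1) * b / (2 * κR))
    (U V HR : (H × H) →L[ℂ] (H × H)) (hU : U = sigmaXT Ky - sigmaYT Kx)
    (hV : V = U + (βR : ℂ) • sigmaZT H)
    (hHR : HR = sigma0T (Kx.comp Kx + Ky.comp Ky) + (2 * (κR : ℂ)) • U +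
        ((γ : ℂ) * b) • sigmaZT H) :
    HR = V.comp V + (2 * (κR : ℂ)) • V -
      ((βR : ℂ) ^ 2) • ContinuousLinearMap.id ℂ (H × H) := by
  have hκ' : (κR : ℂ) ≠ 0 := by exact_mod_cast hκ
  have hb : (2 * (κR : ℂ)) * βR = ((γ : ℂ) + 1) * b := by
    rw [hβ]; push_cast; field_simp
  subst hHR hV hU
  ext p <;>
  · have h1 := congrFun (congrArg DFunLike.coe hcomm) p
    simp only [comp_apply, sub_apply, smul_apply, id_apply] at h1
    rw [sub_eq_iff_eq_add] at h1
    simp only [sigmaXT, sigmaYT, sigmaZT, sigma0T, comp_apply, sub_apply, add_apply,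
      smul_apply, prod_apply, coe_prodMap', coe_fst', coe_snd', neg_apply, id_apply,
      Prod.smul_mk, Prod.mk_add_mk, Prod.mk_sub_mk, Prod.fst_add, Prod.snd_add,
      Prod.fst_sub, Prod.snd_sub, smul_smul, map_add, map_sub, map_smul, map_neg,
      Prod.neg_mk, Prod.fst_neg, Prod.snd_neg, smul_neg, neg_neg, map_zero,
      Prod.smul_fst, Prod.smul_snd, Prod.map_apply, inl_apply, inr_apply] at *
    try rw [h1]
    match_scalars
    all_goals ring_nf
    all_goals try simp only [Complex.I_sq, neg_neg, one_mul, mul_one, mul_neg, neg_mul]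
    all_goals try ring
    all_goals try linear_combination hb
    all_goals linear_combination -hb
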